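/- Assume the girth of X = J(v,k,i) equals 4, and let r = ⌈(k − i)/Δ⌉. Let A and B be vertices of X with x = |A ∩ B|. If r is odd and x ∈ {⌊(k + i − Δ)/2⌋, ⌈(k + i − Δ)/2⌉}, then dist(A,B) = r. -/

import Mathlib

/-- The generalized Johnson graph `J(v,k,i)`: vertices are the `k`-element subsets of a
`v`-element set, two vertices adjacent iff their intersection has exactly `i` elements. -/
def genJohnsonGraph (v k i : ℕ) :
    SimpleGraph {A : Finset (Fin v) // A.card = k} where
  Adj A B := A ≠ B ∧ (A.1 ∩ B.1).card = i
  symm := by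
    constructor
    rintro A B ⟨hne, hcard⟩
    exact ⟨hne.symm, by rwa [Finset.inter_comm]⟩
  loopless := by constructor; rintro A ⟨hne, -⟩; exact hne rfl

/-!
Write `Δ = v - 2k + 2i` and fix `B`. For adjacent `C, C'` inclusion–exclusion gives
`k + i - Δ ≤ |C ∩ B| + |C' ∩ B| ≤ k + i`, and conversely every value of `|C' ∩ B|` compatible with
these bounds is attained, by filling the four Venn regions of `C, B` suitably. So a walk of even
length `2m` to `B` can only start at `C` with `|C ∩ B| ≥ k - mΔ`, one of odd length `2m + 1` only at
`C` with `|C ∩ B| ≤ i + mΔ`, and alternately reflecting `x ↦ k + i - x` and descending by `Δ`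
produces such walks. A triangle exists as soon as `Δ ≥ k - i`, so girth 4 forces `Δ < k - i`, which
puts `(k + i - Δ)/2` above `i` and makes `r` the first admissible length.
-/

open Finset SimpleGraph

section VennRegions

variable {α : Type*} [DecidableEq α]

lemma exists_subset_card_inter_eq_of_le (s t : Finset α) {a b : ℕ}
    (ha : a ≤ #(s ∩ t)) (hb : b ≤ #(s \ t)) :
    ∃ u ⊆ s, #(u ∩ t) = a ∧ #u = a + b := by
  obtain ⟨u₁, hu₁, rfl⟩ := exists_subset_card_eq ha
  obtain ⟨u₂, hu₂, rfl⟩ := exists_subset_card_eq hb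
  have hdisj : Disjoint u₁ u₂ :=
    disjoint_of_subset_left hu₁ (disjoint_of_subset_right hu₂ (disjoint_sdiff_inter s t).symm)
  have hu₂t : u₂ ∩ t = ∅ :=
    disjoint_iff_inter_eq_empty.mp (disjoint_of_subset_left hu₂ sdiff_disjoint)
  refine ⟨u₁ ∪ u₂, union_subset (hu₁.trans inter_subset_left) (hu₂.trans sdiff_subset),
    ?_, card_union_of_disjoint hdisj⟩
  rw [union_inter_distrib_right, hu₂t, union_empty,
    inter_eq_left.mpr (hu₁.trans inter_subset_right)]

lemma card_inter_add_card_inter_le (B C C' : Finset α) :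
    #(C ∩ B) + #(C' ∩ B) ≤ #B + #(C ∩ C') := by
  rw [← card_union_add_card_inter, ← union_inter_distrib_right]
  exact add_le_add (card_le_card inter_subset_right)
    (card_le_card fun z hz => by simp only [mem_inter] at hz ⊢; tauto)

variable [Fintype α]

lemma exists_card_inter_eq_of_le_card_regions {B C : Finset α} {a b c d : ℕ}
    (ha : a ≤ #(C ∩ B)) (hb : b ≤ #(C \ B)) (hc : c ≤ #(B \ C)) (hd : d ≤ #(C ∪ B)ᶜ) :
    ∃ S : Finset α, #S = a + b + c + d ∧ #(S ∩ C) = a + b ∧ #(S ∩ B) = a + c := by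
  obtain ⟨T, hTC, hTB, hT⟩ := exists_subset_card_inter_eq_of_le C B ha hb
  obtain ⟨U, hUC, hUB, hU⟩ := exists_subset_card_inter_eq_of_le Cᶜ B (a := c) (b := d)
    (by rwa [inter_comm, ← sdiff_eq_inter_compl]) (by rwa [sdiff_eq_inter_compl, ← compl_union])
  have hdisj : Disjoint T U :=
    disjoint_of_subset_left hTC (disjoint_of_subset_right hUC disjoint_compl_right)
  have hUC' : U ∩ C = ∅ :=
    disjoint_iff_inter_eq_empty.mp (disjoint_of_subset_left hUC disjoint_compl_left)
  refine ⟨T ∪ U, by rw [card_union_of_disjoint hdisj, hT, hU]; ring, ?_, ?_⟩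
  · rw [union_inter_distrib_right, hUC', union_empty, inter_eq_left.mpr hTC, hT]
  · rw [union_inter_distrib_right,
      card_union_of_disjoint (disjoint_of_subset_left inter_subset_left
        (disjoint_of_subset_right inter_subset_left hdisj)), hTB, hUB]

lemma exists_card_inter_eq_card_inter_eq {B C : Finset α} {k i y : ℕ}
    (hB : #B = k) (hC : #C = k) (h2k : 2 * k ≤ Fintype.card α)
    (h₁ : #(C ∩ B) + i ≤ y + k) (h₂ : y + i ≤ #(C ∩ B) + k) (h₃ : #(C ∩ B) + y ≤ k + i)
    (h₄ : 3 * k ≤ #(C ∩ B) + y + Fintype.card α + i) :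
    ∃ C' : Finset α, #C' = k ∧ #(C' ∩ C) = i ∧ #(C' ∩ B) = y := by
  have hCB : #(C \ B) + #(C ∩ B) = k := by rw [card_sdiff_add_card_inter, hC]
  have hBC : #(B \ C) + #(C ∩ B) = k := by rw [inter_comm, card_sdiff_add_card_inter, hB]
  have hout : #(C ∪ B)ᶜ + #(C ∪ B) = Fintype.card α := by
    rw [card_compl, Nat.sub_add_cancel (card_le_univ _)]
  have hunion : #(C ∪ B) + #(C ∩ B) = 2 * k := by
    rw [card_union_add_card_inter, hC, hB]; ring
  -- `a` is the size of `C' ∩ C ∩ B`; the other three Venn regions of `C'` then have sizes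
  -- `i - a`, `y - a` and `k - i - y + a`
  obtain ⟨a, ha⟩ : ∃ a, i + #(C ∩ B) ≤ a + k ∧ #(C ∩ B) + y ≤ a + k ∧ i + y ≤ a + k ∧
      a ≤ #(C ∩ B) ∧ a ≤ i ∧ a ≤ y ∧ a + 3 * k ≤ Fintype.card α + #(C ∩ B) + i + y :=
    ⟨max (i + #(C ∩ B) - k) (max (#(C ∩ B) + y - k) (i + y - k)), by omega⟩
  obtain ⟨S, hS, hSC, hSB⟩ := exists_card_inter_eq_of_le_card_regions (B := B) (C := C)
    (a := a) (b := i - a) (c := y - a) (d := k - i - (y - a))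
    (by omega) (by omega) (by omega) (by omega)
  exact ⟨S, by omega, by omega, by omega⟩

lemma card_add_card_add_card_le (B C C' : Finset α) :
    #C + #C' + #B ≤ #(C ∩ B) + #(C' ∩ B) + #(C ∩ C') + Fintype.card α := by
  have hCC' := card_union_add_card_inter C C'
  have hB := card_union_add_card_inter (C ∪ C') B
  have hcover : #((C ∪ C') ∩ B) ≤ #(C ∩ B) + #(C' ∩ B) := by
    rw [union_inter_distrib_right]; exact card_union_le _ _
  have huniv : #((C ∪ C') ∪ B) ≤ Fintype.card α := card_le_univ _
  omega

end VennRegions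

lemma SimpleGraph.girth_le_three_of_adj {V : Type*} {G : SimpleGraph V} {a b c : V}
    (hab : G.Adj a b) (hbc : G.Adj b c) (hca : G.Adj c a) : G.girth ≤ 3 := by
  have hcyc : (Walk.cons hab (.cons hbc (.cons hca .nil))).IsCycle := by
    simp [Walk.cons_isCycle_iff, hab.ne, hbc.ne, hca.ne, hab.ne', hca.ne']
  simpa using girth_le_length hcyc

namespace genJohnsonGraph

variable {v k i : ℕ}

lemma adj_of_card_inter_eq (hik : i < k) {A B : {A : Finset (Fin v) // A.card = k}}
    (h : #(A.1 ∩ B.1) = i) : (genJohnsonGraph v k i).Adj A B := by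
  refine ⟨fun hAB => ?_, h⟩
  rw [hAB, inter_self, B.2] at h
  omega

lemma exists_adj_card_inter_eq (hik : i < k) (h2k : 2 * k ≤ v)
    (B C : {A : Finset (Fin v) // A.card = k}) {y : ℕ}
    (h₁ : #(C.1 ∩ B.1) + i ≤ y + k) (h₂ : y + i ≤ #(C.1 ∩ B.1) + k)
    (h₃ : #(C.1 ∩ B.1) + y ≤ k + i) (h₄ : 3 * k ≤ #(C.1 ∩ B.1) + y + v + i) :
    ∃ C', (genJohnsonGraph v k i).Adj C C' ∧ #(C'.1 ∩ B.1) = y := by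
  obtain ⟨C', hC', hC'C, hC'B⟩ :=
    exists_card_inter_eq_card_inter_eq B.2 C.2 (by rwa [Fintype.card_fin]) h₁ h₂ h₃
      (by rwa [Fintype.card_fin])
  exact ⟨⟨C', hC'⟩, adj_of_card_inter_eq hik (by rwa [inter_comm]), hC'B⟩

lemma girth_le_three (hik : i < k) (h2k : 2 * k ≤ v) (h : 3 * k ≤ v + 3 * i) :
    (genJohnsonGraph v k i).girth ≤ 3 := by
  obtain ⟨B, -, hB⟩ := exists_subset_card_eq (s := (univ : Finset (Fin v))) (n := k)
    (by rw [card_univ, Fintype.card_fin]; omega)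
  let B' : {A : Finset (Fin v) // A.card = k} := ⟨B, hB⟩
  have hBB : #(B'.1 ∩ B'.1) = k := by rw [inter_self, B'.2]
  obtain ⟨A, hBA, hAB⟩ := exists_adj_card_inter_eq hik h2k B' B' (y := i)
    (by omega) (by omega) (by omega) (by omega)
  obtain ⟨C, hAC, hCB⟩ := exists_adj_card_inter_eq hik h2k B' A (y := i)
    (by omega) (by omega) (by omega) (by omega)
  exact girth_le_three_of_adj hBA hAC (adj_of_card_inter_eq hik hCB)

lemma card_inter_add_card_inter_le_of_adj {B C C' : {A : Finset (Fin v) // A.card = k}}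
    (h : (genJohnsonGraph v k i).Adj C C') : #(C.1 ∩ B.1) + #(C'.1 ∩ B.1) ≤ k + i := by
  simpa only [B.2, h.2] using card_inter_add_card_inter_le B.1 C.1 C'.1

lemma le_card_inter_add_card_inter_of_adj {B C C' : {A : Finset (Fin v) // A.card = k}}
    (h : (genJohnsonGraph v k i).Adj C C') :
    3 * k ≤ #(C.1 ∩ B.1) + #(C'.1 ∩ B.1) + v + i := by
  have := card_add_card_add_card_le B.1 C.1 C'.1
  rw [C.2, C'.2, B.2, h.2, Fintype.card_fin] at this
  omega

lemma walk_card_inter_bounds {B C : {A : Finset (Fin v) // A.card = k}}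
    (w : (genJohnsonGraph v k i).Walk C B) :
    (∀ m, w.length = 2 * m → k ≤ #(C.1 ∩ B.1) + m * (v - 2 * k + 2 * i)) ∧
    (∀ m, w.length = 2 * m + 1 → #(C.1 ∩ B.1) ≤ i + m * (v - 2 * k + 2 * i)) := by
  induction w with
  | @nil U => exact ⟨fun m _ => by rw [inter_self, U.2]; omega, fun m hm => by simp at hm⟩
  | @cons C C₁ B hadj p ih =>
    have hup := card_inter_add_card_inter_le_of_adj (B := B) hadj
    have hlow := le_card_inter_add_card_inter_of_adj (B := B) hadj
    rw [Walk.length_cons]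
    refine ⟨fun m hm => ?_, fun m hm => ?_⟩
    · obtain ⟨m, rfl⟩ : ∃ m', m = m' + 1 := ⟨m - 1, by omega⟩
      have := ih.2 m (by omega)
      rw [add_one_mul]
      omega
    · have := ih.1 m (by omega)
      omega

lemma exists_walk_length_eq_two_mul_add_one (hik : i < k) (h2k : 2 * k ≤ v)
    (B : {A : Finset (Fin v) // A.card = k}) (n : ℕ) (C : {A : Finset (Fin v) // A.card = k})
    (hi : i ≤ #(C.1 ∩ B.1)) (hn : #(C.1 ∩ B.1) ≤ i + n * (v - 2 * k + 2 * i))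
    (hki : 2 * #(C.1 ∩ B.1) ≤ k + i) :
    ∃ w : (genJohnsonGraph v k i).Walk C B, w.length = 2 * n + 1 := by
  induction n generalizing C with
  | zero => exact ⟨.cons (adj_of_card_inter_eq hik (by omega)) .nil, rfl⟩
  | succ n ih =>
    have hCk : #(C.1 ∩ B.1) ≤ k := (card_le_card inter_subset_right).trans_eq B.2
    -- reflect `|C ∩ B|` to `k + i - |C ∩ B|`, then come back down by `Δ`
    obtain ⟨C₁, hCC₁, hC₁B⟩ := exists_adj_card_inter_eq hik h2k B C
      (y := k + i - #(C.1 ∩ B.1))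
      (by omega) (by omega) (by omega) (by omega)
    obtain ⟨C₂, hC₁C₂, hC₂B⟩ := exists_adj_card_inter_eq hik h2k B C₁
      (y := max i (#(C.1 ∩ B.1) - (v - 2 * k + 2 * i)))
      (by omega) (by omega) (by omega) (by omega)
    rw [add_one_mul] at hn
    obtain ⟨w, hw⟩ := ih C₂ (by omega) (by omega) (by omega)
    exact ⟨.cons hCC₁ (.cons hC₁C₂ w), by simp only [Walk.length_cons, hw]; ring⟩

end genJohnsonGraph

theorem dist_eq_r_odd_general (v k i : ℕ) (hik : i < k)
    (h2k : 2 * k ≤ v) (hexc : ¬(v = 2 * k ∧ i = 0))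
    (hg : (genJohnsonGraph v k i).girth = 4)
    (hr : Odd ((k - i) ⌈/⌉ (v - 2 * k + 2 * i)))
    (A B : {A : Finset (Fin v) // A.card = k})
    (hx : (A.1 ∩ B.1).card = (k + i - (v - 2 * k + 2 * i)) / 2 ∨
          (A.1 ∩ B.1).card = (k + i - (v - 2 * k + 2 * i)) ⌈/⌉ 2) :
    (genJohnsonGraph v k i).dist A B = (k - i) ⌈/⌉ (v - 2 * k + 2 * i) := by
  have hΔ : 0 < v - 2 * k + 2 * i := by omega
  have htriangle_free : v + 3 * i < 3 * k := by
    by_contra! h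
    have := genJohnsonGraph.girth_le_three hik h2k h
    omega
  obtain ⟨n, hn⟩ := hr
  have hle : k - i ≤ 2 * (n * (v - 2 * k + 2 * i)) + (v - 2 * k + 2 * i) := by
    have := (ceilDiv_le_iff_le_mul hΔ).1 hn.le
    linarith
  have hlt : 2 * (n * (v - 2 * k + 2 * i)) < k - i := by
    by_contra! h
    have := (ceilDiv_le_iff_le_mul hΔ).2
      (show k - i ≤ (v - 2 * k + 2 * i) * (2 * n) by linarith)
    omega
  have hx2 : 2 * #(A.1 ∩ B.1) ≤ k + i - (v - 2 * k + 2 * i) + 1 ∧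
      k + i - (v - 2 * k + 2 * i) ≤ 2 * #(A.1 ∩ B.1) + 1 := by
    rw [Nat.ceilDiv_eq_add_pred_div] at hx
    omega
  rw [hn]
  obtain ⟨w, hw⟩ := genJohnsonGraph.exists_walk_length_eq_two_mul_add_one hik h2k B n A
    (by omega) (by omega) (by omega)
  refine le_antisymm (hw ▸ dist_le w) (not_lt.1 fun hdist => ?_)
  obtain ⟨p, hp⟩ := Reachable.exists_walk_length_eq_dist ⟨w⟩
  obtain ⟨heven, hodd⟩ := genJohnsonGraph.walk_card_inter_bounds p
  have hmono : ∀ m ≤ n, m * (v - 2 * k + 2 * i) ≤ n * (v - 2 * k + 2 * i) :=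
    fun m hm => Nat.mul_le_mul_right _ hm
  obtain ⟨m, hm | hm⟩ := Nat.even_or_odd' ((genJohnsonGraph v k i).dist A B)
  · have := heven m (hp.trans hm)
    have := hmono m (by omega)
    omega
  · have := hodd m (hp.trans hm)
    have := hmono (m + 1) (by omega)
    rw [add_one_mul] at this
    omega

/-- Assume `J(v,k,i)` has girth 4 and let `r = ⌈(k-i)/Δ⌉`. If `r` is odd and
`x = |A ∩ B| ∈ {⌊(k+i-Δ)/2⌋, ⌈(k+i-Δ)/2⌉}`, then `dist(A,B) = r`. -/
theorem dist_eq_r_odd (v k i : ℕ) (hik : i < k) (hkv : k < v)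
    (h2k : 2 * k ≤ v) (hexc : ¬(v = 2 * k ∧ i = 0))
    (hg : (genJohnsonGraph v k i).girth = 4)
    (hr : Odd ((k - i) ⌈/⌉ (v - 2 * k + 2 * i)))
    (A B : {A : Finset (Fin v) // A.card = k})
    (hx : (A.1 ∩ B.1).card = (k + i - (v - 2 * k + 2 * i)) / 2 ∨
          (A.1 ∩ B.1).card = (k + i - (v - 2 * k + 2 * i)) ⌈/⌉ 2) :
    (genJohnsonGraph v k i).dist A B = (k - i) ⌈/⌉ (v - 2 * k + 2 * i) :=
  dist_eq_r_odd_general v k i hik h2k hexc hg hr A B hx
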